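/- Under the hypothesis that every ideal of the function ring has a zero set equal to the zero set of finitely many of its members, every subset Y of M has a smallest Nash subset containing it (a 'Nash closure'). -/
import Mathlib


/-- The common zero set of a set of functions in a ring `F` of `R`-valued functions on `M`. -/
def zeroSet {M R : Type*} [CommRing R] (F : Subring (M → R)) (S : Set F) : Set M :=
  {x | ∀ f ∈ S, (f : M → R) x = 0}

/-- A Nash subset of `M`: the common zero set of finitely many functions in `F`. -/
def IsNashSubset {M R : Type*} [CommRing R] (F : Subring (M → R)) (X : Set M) : Prop :=
  ∃ s : Finset F, X = zeroSet F (s : Set F)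

/-- The ideal of functions vanishing on `Y`. -/
def vanishingIdeal {M R : Type*} [CommRing R] (F : Subring (M → R)) (Y : Set M) : Ideal F where
  carrier := {f | ∀ y ∈ Y, (f : M → R) y = 0}
  zero_mem' := by intro y _; rfl
  add_mem' := by
    intro a b ha hb y hy
    have := ha y hy; have := hb y hy
    simp_all [Subring.coe_add, Pi.add_apply]
  smul_mem' := by
    intro c f hf y hy
    have := hf y hy
    simp_all [Subring.coe_mul, Pi.mul_apply]

/-- If the zero set of every ideal of `F` equals the zero set of finitely many of its
elements, then every subset `Y` of `M` has a smallest Nash subset containing it. -/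
theorem nash_closure_exists {M R : Type*} [CommRing R] (F : Subring (M → R))
    (hfin : ∀ I : Ideal F, ∃ s : Finset F, (s : Set F) ⊆ (I : Set F) ∧
      zeroSet F (I : Set F) = zeroSet F (s : Set F)) (Y : Set M) :
    ∃ B : Set M, IsNashSubset F B ∧ Y ⊆ B ∧
      ∀ X : Set M, IsNashSubset F X → Y ⊆ X → B ⊆ X := by
  obtain ⟨s, hsub, hzs⟩ := hfin (vanishingIdeal F Y)
  refine ⟨zeroSet F (s : Set F), ⟨s, rfl⟩, ?_, ?_⟩
  · intro y hy f hf
    exact hsub hf y hy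
  · rintro X ⟨t, rfl⟩ hYX x hx
    intro f hf
    have hfI : f ∈ vanishingIdeal F Y := fun y hy => hYX hy f hf
    have hxI : x ∈ zeroSet F ((vanishingIdeal F Y : Ideal F) : Set F) := by
      rw [hzs]; exact hx
    exact hxI f hfI
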